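/- arXiv:1903.04737 — 2 statements merged into one kernel-verified Lean document; each statement's English description precedes it below -/
import Mathlib

section
/- Let A be a red–blue arrangement, let G be a finite simple graph, and let f be a bijection from the vertex set of G to the set of connected components of the bichromatic crossing graph of A such that: (i) for each vertex v of G, no two red segments belonging to the component f(v) cross each other; and (ii) for all distinct vertices u, v of G, there exist a red segment belonging to f(u) and a red segment belonging to f(v) that cross each other if and only if u and v are adjacent in G. For an independent set Z of G, let Φ(Z) ⊆ A consist of all red segments of the components f(v) with v ∈ Z together with all blue segments of the components f(v) with v ∉ Z. Then Φ is a bijection from the set of independent sets of G onto the set of maximum-cardinality non-crossing subsets of A. Moreover, if every connected component of the bichromatic crossing graph of A contains exactly 6 red segments, then for every independent set Z of G, the set Φ(Z) contains exactly 6·|Z| red segments. -/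
/-- The Euclidean plane. -/
abbrev Plane : Type := EuclideanSpace ℝ (Fin 2)

/-- A segment: the closed convex hull of two distinct points of the plane. -/
structure Seg where
  p : Plane
  q : Plane
  ne : p ≠ q

/-- The point set of a segment (the closed segment `[p, q]`). -/
def Seg.pts (s : Seg) : Set Plane := segment ℝ s.p s.q

/-- The relative interior of a segment (the open segment `(p, q)`). -/
def Seg.relint (s : Seg) : Set Plane := openSegment ℝ s.p s.q

/-- Two segments cross if their intersection is a single point lying in the
relative interior of both. -/
def Crosses (s t : Seg) : Prop :=
  ∃ x : Plane, s.pts ∩ t.pts = {x} ∧ x ∈ s.relint ∧ x ∈ t.relint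

/-- A red–blue arrangement: a finite set `A` of segments, each colored red
(`red s = true`) or blue (`red s = false`), such that (1) any two distinct
segments are disjoint or cross, (2) no point lies on three or more segments,
(3) each blue segment crosses exactly two segments, both red, (4) each red
segment crosses exactly three segments, exactly two of which are blue, and
(5) the union of the segments is a connected subset of the plane. -/
structure IsRBArrangement (A : Set Seg) (red : Seg → Bool) : Prop where
  finite : A.Finite
  disjoint_or_cross : ∀ s ∈ A, ∀ t ∈ A, s ≠ t → Disjoint s.pts t.pts ∨ Crosses s t
  no_triple : ∀ x : Plane, {s ∈ A | x ∈ s.pts}.ncard ≤ 2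
  blue_cross : ∀ s ∈ A, red s = false →
    {t ∈ A | Crosses s t}.ncard = 2 ∧ ∀ t ∈ A, Crosses s t → red t = true
  red_cross : ∀ s ∈ A, red s = true →
    {t ∈ A | Crosses s t}.ncard = 3 ∧ {t ∈ A | Crosses s t ∧ red t = false}.ncard = 2
  connected : IsConnected (⋃ s ∈ A, s.pts)

/-- A set of segments is non-crossing if no two of its segments cross. -/
def NonCrossing (S : Set Seg) : Prop := ∀ s ∈ S, ∀ t ∈ S, ¬ Crosses s t

/-- The bichromatic crossing graph of an arrangement: two segments of `A` are
adjacent exactly when they cross and have different colors. -/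
def bicrossGraph (A : Set Seg) (red : Seg → Bool) : SimpleGraph Seg where
  Adj s t := s ∈ A ∧ t ∈ A ∧ Crosses s t ∧ red s ≠ red t
  symm := ⟨by
    rintro s t ⟨hs, ht, ⟨x, hx, h1, h2⟩, hc⟩
    exact ⟨ht, hs, ⟨x, by rwa [Set.inter_comm], h2, h1⟩, Ne.symm hc⟩⟩
  loopless := ⟨by rintro s ⟨_, _, _, h⟩; exact h rfl⟩

/-- `C` is the vertex set of a connected component of the bichromatic crossing
graph of the arrangement `A`. -/
def IsCompVtxSet (A : Set Seg) (red : Seg → Bool) (C : Set Seg) : Prop :=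
  ∃ s ∈ A, C = {t ∈ A | (bicrossGraph A red).Reachable s t}

/-- An independent set of a simple graph: a set of vertices no two of which
are adjacent. -/
def IsIndepSet {V : Type*} (G : SimpleGraph V) (Z : Set V) : Prop :=
  ∀ u ∈ Z, ∀ v ∈ Z, ¬ G.Adj u v

/-! ### Auxiliary development -/


attribute [local instance] Classical.propDecidable

namespace RBAux

open Set

lemma crosses_symm {s t : Seg} (h : Crosses s t) : Crosses t s := by
  obtain ⟨x, hx, h1, h2⟩ := h
  exact ⟨x, by rwa [Set.inter_comm], h2, h1⟩

variable {A : Set Seg} {red : Seg → Bool}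

lemma bicross_adj_iff {s t : Seg} :
    (bicrossGraph A red).Adj s t ↔ s ∈ A ∧ t ∈ A ∧ Crosses s t ∧ red s ≠ red t := Iff.rfl

/-- The component (reachability class) of `s`. -/
def comp (A : Set Seg) (red : Seg → Bool) (s : Seg) : Set Seg :=
  {t ∈ A | (bicrossGraph A red).Reachable s t}

lemma mem_comp_self {s : Seg} (hs : s ∈ A) : s ∈ comp A red s :=
  ⟨hs, SimpleGraph.Reachable.refl s⟩

lemma isCompVtxSet_comp {s : Seg} (hs : s ∈ A) : IsCompVtxSet A red (comp A red s) :=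
  ⟨s, hs, rfl⟩

lemma eq_comp_of_mem {C : Set Seg} (hC : IsCompVtxSet A red C) {t : Seg} (ht : t ∈ C) :
    C = comp A red t := by
  obtain ⟨s, hs, rfl⟩ := hC
  ext u
  exact ⟨fun hu => ⟨hu.1, ht.2.symm.trans hu.2⟩, fun hu => ⟨hu.1, ht.2.trans hu.2⟩⟩

lemma comp_subset {C : Set Seg} (hC : IsCompVtxSet A red C) : C ⊆ A := by
  obtain ⟨s, hs, rfl⟩ := hC; exact fun t ht => ht.1

lemma comp_closed {C : Set Seg} (hC : IsCompVtxSet A red C) {t u : Seg}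
    (ht : t ∈ C) (h : (bicrossGraph A red).Adj t u) : u ∈ C := by
  obtain ⟨s, hs, rfl⟩ := hC
  exact ⟨h.2.1, ht.2.trans h.reachable⟩

/-- The bichromatic neighbours of a segment. -/
def nbr (A : Set Seg) (red : Seg → Bool) (s : Seg) : Set Seg :=
  {t | (bicrossGraph A red).Adj s t}

lemma nbr_subset {s : Seg} : nbr A red s ⊆ A := fun t ht => ht.2.1

lemma nbr_card (hA : IsRBArrangement A red) {s : Seg} (hs : s ∈ A) :
    (nbr A red s).ncard = 2 := by
  cases hred : red s with
  | false =>
    obtain ⟨hcard, hall⟩ := hA.blue_cross s hs hred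
    have he : nbr A red s = {t ∈ A | Crosses s t} := by
      ext t
      constructor
      · rintro ⟨_, ht, hc, _⟩; exact ⟨ht, hc⟩
      · rintro ⟨ht, hc⟩
        exact ⟨hs, ht, hc, by rw [hred, hall t ht hc]; simp⟩
    rw [he]; exact hcard
  | true =>
    obtain ⟨_, hcard⟩ := hA.red_cross s hs hred
    have he : nbr A red s = {t ∈ A | Crosses s t ∧ red t = false} := by
      ext t
      constructor
      · rintro ⟨_, ht, hc, hne⟩
        refine ⟨ht, hc, ?_⟩
        cases h2 : red t
        · rfl
        · rw [hred, h2] at hne; exact absurd rfl hne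
      · rintro ⟨ht, hc, hf⟩
        exact ⟨hs, ht, hc, by rw [hred, hf]; simp⟩
    rw [he]; exact hcard

/-- The red segments of a set. -/
def reds (red : Seg → Bool) (C : Set Seg) : Set Seg := {s ∈ C | red s = true}

/-- The blue segments of a set. -/
def blues (red : Seg → Bool) (C : Set Seg) : Set Seg := {s ∈ C | red s = false}

lemma reds_union_blues (C : Set Seg) : reds red C ∪ blues red C = C := by
  ext s
  simp only [reds, blues, Set.mem_union, Set.mem_setOf_eq]
  cases h : red s <;> simp [h]

lemma reds_disjoint_blues (C : Set Seg) : Disjoint (reds red C) (blues red C) := by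
  rw [Set.disjoint_left]
  rintro s ⟨_, h1⟩ ⟨_, h2⟩
  rw [h1] at h2; exact Bool.noConfusion h2


lemma ncard_sep_eq_filter_card {α : Type*} {Y : Set α} (hY : Y.Finite) (p : α → Prop) :
    {y ∈ Y | p y}.ncard = (hY.toFinset.filter p).card := by
  rw [← Set.ncard_coe_finset]
  congr 1
  ext y
  simp

lemma dc_le_set {α : Type*} (r : α → α → Prop) (X Y : Set α) (hX : X.Finite) (hY : Y.Finite)
    (h1 : ∀ a ∈ X, {b ∈ Y | r a b}.ncard = 2)
    (h2 : ∀ b ∈ Y, {a ∈ X | r a b}.ncard ≤ 2) : X.ncard ≤ Y.ncard := by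
  classical
  have hmain := Finset.sum_card_bipartiteAbove_eq_sum_card_bipartiteBelow
    (s := hX.toFinset) (t := hY.toFinset) (r := r)
  have hL : ∑ a ∈ hX.toFinset, (hY.toFinset.bipartiteAbove r a).card = 2 * X.ncard := by
    rw [Finset.sum_congr rfl (fun a ha => ?_), Finset.sum_const, smul_eq_mul,
      Set.ncard_eq_toFinset_card X hX, mul_comm]
    rw [Finset.bipartiteAbove, ← ncard_sep_eq_filter_card hY]
    exact h1 a (hX.mem_toFinset.1 ha)
  have hR : ∑ b ∈ hY.toFinset, (hX.toFinset.bipartiteBelow r b).card ≤ 2 * Y.ncard := by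
    calc ∑ b ∈ hY.toFinset, (hX.toFinset.bipartiteBelow r b).card
        ≤ ∑ _b ∈ hY.toFinset, 2 := by
          refine Finset.sum_le_sum (fun b hb => ?_)
          rw [Finset.bipartiteBelow, ← ncard_sep_eq_filter_card hX]
          exact h2 b (hY.mem_toFinset.1 hb)
      _ = 2 * Y.ncard := by
          rw [Finset.sum_const, smul_eq_mul, Set.ncard_eq_toFinset_card Y hY, mul_comm]
  omega

lemma dc_eq_set {α : Type*} (r : α → α → Prop) (X Y : Set α) (hX : X.Finite) (hY : Y.Finite)
    (h1 : ∀ a ∈ X, {b ∈ Y | r a b}.ncard = 2)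
    (h2 : ∀ b ∈ Y, {a ∈ X | r a b}.ncard ≤ 2)
    (hcard : X.ncard = Y.ncard) :
    ∀ b ∈ Y, {a ∈ X | r a b}.ncard = 2 := by
  classical
  by_contra hcon
  push_neg at hcon
  obtain ⟨b0, hb0, hne⟩ := hcon
  have hmain := Finset.sum_card_bipartiteAbove_eq_sum_card_bipartiteBelow
    (s := hX.toFinset) (t := hY.toFinset) (r := r)
  have hL : ∑ a ∈ hX.toFinset, (hY.toFinset.bipartiteAbove r a).card = 2 * X.ncard := by
    rw [Finset.sum_congr rfl (fun a ha => ?_), Finset.sum_const, smul_eq_mul,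
      Set.ncard_eq_toFinset_card X hX, mul_comm]
    rw [Finset.bipartiteAbove, ← ncard_sep_eq_filter_card hY]
    exact h1 a (hX.mem_toFinset.1 ha)
  have hlt : ∑ b ∈ hY.toFinset, (hX.toFinset.bipartiteBelow r b).card < 2 * Y.ncard := by
    have hstrict : (hX.toFinset.bipartiteBelow r b0).card < 2 := by
      rw [Finset.bipartiteBelow, ← ncard_sep_eq_filter_card hX]
      exact lt_of_le_of_ne (h2 b0 hb0) hne
    calc ∑ b ∈ hY.toFinset, (hX.toFinset.bipartiteBelow r b).card
        < ∑ _b ∈ hY.toFinset, 2 := by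
          refine Finset.sum_lt_sum (fun b hb => ?_) ⟨b0, hY.mem_toFinset.2 hb0, hstrict⟩
          rw [Finset.bipartiteBelow, ← ncard_sep_eq_filter_card hX]
          exact h2 b (hY.mem_toFinset.1 hb)
      _ = 2 * Y.ncard := by
          rw [Finset.sum_const, smul_eq_mul, Set.ncard_eq_toFinset_card Y hY, mul_comm]
  omega


variable {A : Set Seg} {red : Seg → Bool}

lemma nbr_subset_comp {C : Set Seg} (hC : IsCompVtxSet A red C) {s : Seg} (hs : s ∈ C) :
    nbr A red s ⊆ C := fun t ht => comp_closed hC hs ht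

lemma nbr_finite (hA : IsRBArrangement A red) (s : Seg) : (nbr A red s).Finite :=
  hA.finite.subset nbr_subset

/-- Neighbours of a red segment in a component are the blues of the component. -/
lemma nbr_red_eq {C : Set Seg} (hC : IsCompVtxSet A red C) {a : Seg} (ha : a ∈ C)
    (har : red a = true) : {b ∈ blues red C | (bicrossGraph A red).Adj a b} = nbr A red a := by
  ext t
  constructor
  · rintro ⟨_, hadj⟩; exact hadj
  · intro hadj
    refine ⟨⟨comp_closed hC ha hadj, ?_⟩, hadj⟩
    have := hadj.2.2.2
    cases h2 : red t
    · rfl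
    · rw [har, h2] at this; exact absurd rfl this

lemma nbr_blue_eq {C : Set Seg} (hC : IsCompVtxSet A red C) {a : Seg} (ha : a ∈ C)
    (har : red a = false) : {b ∈ reds red C | (bicrossGraph A red).Adj a b} = nbr A red a := by
  ext t
  constructor
  · rintro ⟨_, hadj⟩; exact hadj
  · intro hadj
    refine ⟨⟨comp_closed hC ha hadj, ?_⟩, hadj⟩
    have := hadj.2.2.2
    cases h2 : red t
    · rw [har, h2] at this; exact absurd rfl this
    · rfl

lemma adj_symm_mem {X : Set Seg} {a b : Seg} :
    {x ∈ X | (bicrossGraph A red).Adj x b} ⊆ nbr A red b ∪ ∅ := by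
  rintro x ⟨_, h⟩; exact Or.inl h.symm

lemma red_card_eq_blue_card (hA : IsRBArrangement A red) {C : Set Seg}
    (hC : IsCompVtxSet A red C) : (reds red C).ncard = (blues red C).ncard := by
  have hCA : C ⊆ A := comp_subset hC
  have hRf : (reds red C).Finite := hA.finite.subset (fun s hs => hCA hs.1)
  have hBf : (blues red C).Finite := hA.finite.subset (fun s hs => hCA hs.1)
  have key : ∀ (X Y : Set Seg), X = reds red C ∧ Y = blues red C ∨
      X = blues red C ∧ Y = reds red C → ∀ a ∈ X, {b ∈ Y | (bicrossGraph A red).Adj a b}.ncard = 2 := by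
    rintro X Y (⟨rfl, rfl⟩ | ⟨rfl, rfl⟩) a ha
    · rw [nbr_red_eq hC ha.1 ha.2]; exact nbr_card hA (hCA ha.1)
    · rw [nbr_blue_eq hC ha.1 ha.2]; exact nbr_card hA (hCA ha.1)
  have hub : ∀ (X : Set Seg), X ⊆ A → ∀ b ∈ A,
      {a ∈ X | (bicrossGraph A red).Adj a b}.ncard ≤ 2 := by
    intro X hXA b hb
    have hsub : {a ∈ X | (bicrossGraph A red).Adj a b} ⊆ nbr A red b := by
      rintro x ⟨_, h⟩; exact h.symm
    calc {a ∈ X | (bicrossGraph A red).Adj a b}.ncard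
        ≤ (nbr A red b).ncard := Set.ncard_le_ncard hsub (nbr_finite hA b)
      _ = 2 := nbr_card hA hb
  have h1 := dc_le_set (bicrossGraph A red).Adj (reds red C) (blues red C) hRf hBf
    (key _ _ (Or.inl ⟨rfl, rfl⟩)) (fun b hb => hub _ (fun s hs => hCA hs.1) b (hCA hb.1))
  have h2 := dc_le_set (bicrossGraph A red).Adj (blues red C) (reds red C) hBf hRf
    (key _ _ (Or.inr ⟨rfl, rfl⟩)) (fun b hb => hub _ (fun s hs => hCA hs.1) b (hCA hb.1))
  omega

lemma comp_ncard_eq (hA : IsRBArrangement A red) {C : Set Seg} (hC : IsCompVtxSet A red C) :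
    C.ncard = 2 * (reds red C).ncard := by
  have hCA : C ⊆ A := comp_subset hC
  have hRf : (reds red C).Finite := hA.finite.subset (fun s hs => hCA hs.1)
  have hBf : (blues red C).Finite := hA.finite.subset (fun s hs => hCA hs.1)
  have hsum : C.ncard = (reds red C).ncard + (blues red C).ncard := by
    rw [← Set.ncard_union_eq (reds_disjoint_blues C) hRf hBf, reds_union_blues]
  rw [hsum, red_card_eq_blue_card hA hC]
  omega

lemma below_card_le (hA : IsRBArrangement A red) {X : Set Seg} {b : Seg} (hb : b ∈ A) :
    {a ∈ X | (bicrossGraph A red).Adj a b}.ncard ≤ 2 := by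
  have hsub : {a ∈ X | (bicrossGraph A red).Adj a b} ⊆ nbr A red b := by
    rintro x ⟨_, h⟩; exact h.symm
  calc {a ∈ X | (bicrossGraph A red).Adj a b}.ncard
      ≤ (nbr A red b).ncard := Set.ncard_le_ncard hsub (nbr_finite hA b)
    _ = 2 := nbr_card hA hb

lemma noncross_nbr_eq {C : Set Seg} (hC : IsCompVtxSet A red C) {I : Set Seg} (hIC : I ⊆ C)
    (hnc : ∀ s ∈ I, ∀ t ∈ I, ¬ Crosses s t) {a : Seg} (ha : a ∈ I) :
    {b ∈ C \ I | (bicrossGraph A red).Adj a b} = nbr A red a := by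
  ext t
  constructor
  · rintro ⟨_, h⟩; exact h
  · intro h
    exact ⟨⟨comp_closed hC (hIC ha) h, fun htI => hnc a ha t htI h.2.2.1⟩, h⟩

lemma noncross_card_le (hA : IsRBArrangement A red) {C : Set Seg} (hC : IsCompVtxSet A red C)
    {I : Set Seg} (hIC : I ⊆ C) (hnc : ∀ s ∈ I, ∀ t ∈ I, ¬ Crosses s t) :
    I.ncard ≤ (reds red C).ncard := by
  have hCA : C ⊆ A := comp_subset hC
  have hIf : I.Finite := hA.finite.subset (hIC.trans hCA)
  have hCf : C.Finite := hA.finite.subset hCA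
  have hle := dc_le_set (bicrossGraph A red).Adj I (C \ I) hIf (hCf.diff (t := I))
    (fun a ha => by rw [noncross_nbr_eq hC hIC hnc ha]; exact nbr_card hA (hCA (hIC ha)))
    (fun b hb => below_card_le hA (hCA hb.1))
  have hdiff : (C \ I).ncard = C.ncard - I.ncard := Set.ncard_diff hIC hIf
  have hIC' : I.ncard ≤ C.ncard := Set.ncard_le_ncard hIC hCf
  have h2 := comp_ncard_eq hA hC
  omega

lemma noncross_eq_reds_or_blues (hA : IsRBArrangement A red) {C : Set Seg}
    (hC : IsCompVtxSet A red C) {I : Set Seg} (hIC : I ⊆ C)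
    (hnc : ∀ s ∈ I, ∀ t ∈ I, ¬ Crosses s t)
    (hcard : I.ncard = (reds red C).ncard) :
    I = reds red C ∨ I = blues red C := by
  have hCA : C ⊆ A := comp_subset hC
  have hIf : I.Finite := hA.finite.subset (hIC.trans hCA)
  have hCf : C.Finite := hA.finite.subset hCA
  have hdcard : I.ncard = (C \ I).ncard := by
    have h1 : (C \ I).ncard = C.ncard - I.ncard := Set.ncard_diff hIC hIf
    have h2 := comp_ncard_eq hA hC
    have h3 : I.ncard ≤ C.ncard := Set.ncard_le_ncard hIC hCf
    omega
  have heq := dc_eq_set (bicrossGraph A red).Adj I (C \ I) hIf (hCf.diff (t := I))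
    (fun a ha => by rw [noncross_nbr_eq hC hIC hnc ha]; exact nbr_card hA (hCA (hIC ha)))
    (fun b hb => below_card_le hA (hCA hb.1)) hdcard
  have hflip : ∀ b ∈ C \ I, nbr A red b ⊆ I := by
    intro b hb
    have hsub : {a ∈ I | (bicrossGraph A red).Adj a b} ⊆ nbr A red b := by
      rintro x ⟨_, h⟩; exact h.symm
    have he : {a ∈ I | (bicrossGraph A red).Adj a b} = nbr A red b :=
      Set.eq_of_subset_of_ncard_le hsub
        (by rw [heq b hb, nbr_card hA (hCA hb.1)]) (nbr_finite hA b)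
    intro t ht
    exact (he.symm ▸ ht : t ∈ {a ∈ I | (bicrossGraph A red).Adj a b}).1
  obtain ⟨s0, hs0A, hCdef⟩ := hC
  have hC' : IsCompVtxSet A red C := ⟨s0, hs0A, hCdef⟩
  have hs0C : s0 ∈ C := by rw [hCdef]; exact ⟨hs0A, SimpleGraph.Reachable.refl s0⟩
  have walklem : ∀ t u : Seg, (bicrossGraph A red).Walk t u → t ∈ C →
      ((u ∈ I ↔ t ∈ I) ↔ red u = red t) := by
    intro t u w
    induction w with
    | nil => intro _; simp
    | @cons t v u h p ih =>
      intro ht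
      have hvC : v ∈ C := comp_closed hC' ht h
      have ihv := ih hvC
      have hflipI : v ∈ I ↔ ¬ (t ∈ I) := by
        constructor
        · intro hvI htI; exact hnc t htI v hvI h.2.2.1
        · intro htI; exact hflip t ⟨ht, htI⟩ h
      have hflipR : red v = ! red t := by
        have hne := h.2.2.2
        cases hvr : red v <;> cases htr : red t <;> simp_all
      by_cases h1 : u ∈ I <;> by_cases h2 : t ∈ I <;> by_cases h3 : v ∈ I <;>
        cases hur : red u <;> cases htr : red t <;> simp_all
  have key : ∀ t ∈ C, ((t ∈ I ↔ s0 ∈ I) ↔ red t = red s0) := by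
    intro t htC
    have hreach : (bicrossGraph A red).Reachable s0 t := by
      rw [hCdef] at htC; exact htC.2
    obtain ⟨w⟩ := hreach
    exact walklem s0 t w hs0C
  by_cases hs0I : s0 ∈ I
  · cases hs0r : red s0 with
    | true =>
      left
      ext t
      constructor
      · intro htI
        refine ⟨hIC htI, ?_⟩
        have hk := key t (hIC htI)
        rw [hs0r] at hk
        exact hk.mp (iff_of_true htI hs0I)
      · rintro ⟨htC, htr⟩
        have hk := key t htC
        rw [hs0r, htr] at hk
        exact (hk.mpr rfl).mpr hs0I
    | false =>
      right
      ext t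
      constructor
      · intro htI
        refine ⟨hIC htI, ?_⟩
        have hk := key t (hIC htI)
        rw [hs0r] at hk
        exact hk.mp (iff_of_true htI hs0I)
      · rintro ⟨htC, htr⟩
        have hk := key t htC
        rw [hs0r, htr] at hk
        exact (hk.mpr rfl).mpr hs0I
  · cases hs0r : red s0 with
    | true =>
      right
      ext t
      constructor
      · intro htI
        refine ⟨hIC htI, ?_⟩
        have hk := key t (hIC htI)
        rw [hs0r] at hk
        cases htr : red t
        · rfl
        · exact absurd ((hk.mpr htr).mp htI) hs0I
      · rintro ⟨htC, htr⟩
        have hk := key t htC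
        rw [hs0r, htr] at hk
        by_contra htI'
        exact Bool.noConfusion (hk.mp ⟨fun h => absurd h htI', fun h => absurd h hs0I⟩)
    | false =>
      left
      ext t
      constructor
      · intro htI
        refine ⟨hIC htI, ?_⟩
        have hk := key t (hIC htI)
        rw [hs0r] at hk
        cases htr : red t
        · exact absurd ((hk.mpr htr).mp htI) hs0I
        · rfl
      · rintro ⟨htC, htr⟩
        have hk := key t htC
        rw [hs0r, htr] at hk
        by_contra htI'
        exact Bool.noConfusion (hk.mp ⟨fun h => absurd h htI', fun h => absurd h hs0I⟩)

lemma exists_red_mem (hA : IsRBArrangement A red) {C : Set Seg} (hC : IsCompVtxSet A red C) :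
    ∃ s ∈ C, red s = true := by
  obtain ⟨s0, hs0A, hCdef⟩ := hC
  have hs0C : s0 ∈ C := by rw [hCdef]; exact ⟨hs0A, SimpleGraph.Reachable.refl s0⟩
  cases hs0r : red s0 with
  | true => exact ⟨s0, hs0C, hs0r⟩
  | false =>
    have hne : (nbr A red s0).Nonempty := by
      rw [← Set.ncard_pos (nbr_finite hA s0), nbr_card hA hs0A]; omega
    obtain ⟨t, ht⟩ := hne
    refine ⟨t, comp_closed ⟨s0, hs0A, hCdef⟩ hs0C ht, ?_⟩
    have hne2 := ht.2.2.2
    cases htr : red t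
    · rw [hs0r, htr] at hne2; exact absurd rfl hne2
    · rfl

section Global

variable {V : Type*} [Fintype V] {G : SimpleGraph V} {f : V → Set Seg}

/-- The candidate maximum non-crossing set associated to a set of vertices. -/
def Phi (red : Seg → Bool) (f : V → Set Seg) (Z : Set V) : Set Seg :=
  {s : Seg | (red s = true ∧ ∃ v ∈ Z, s ∈ f v) ∨
             (red s = false ∧ ∃ v : V, v ∉ Z ∧ s ∈ f v)}

lemma disj_comp (hf : ∀ v : V, IsCompVtxSet A red (f v)) (hinj : Function.Injective f)
    {u v : V} {s : Seg} (hsu : s ∈ f u) (hsv : s ∈ f v) : u = v :=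
  hinj ((eq_comp_of_mem (hf u) hsu).trans (eq_comp_of_mem (hf v) hsv).symm)

lemma cover_comp (hsurj : ∀ C : Set Seg, IsCompVtxSet A red C → ∃ v : V, f v = C)
    {s : Seg} (hs : s ∈ A) : ∃ v : V, s ∈ f v := by
  obtain ⟨v, hv⟩ := hsurj (comp A red s) (isCompVtxSet_comp hs)
  exact ⟨v, hv ▸ mem_comp_self hs⟩

lemma Phi_subset (hf : ∀ v : V, IsCompVtxSet A red (f v)) (Z : Set V) :
    Phi red f Z ⊆ A := by
  rintro s (⟨_, v, _, hsv⟩ | ⟨_, v, _, hsv⟩) <;> exact comp_subset (hf v) hsv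

lemma Phi_inter_mem (hf : ∀ v : V, IsCompVtxSet A red (f v)) (hinj : Function.Injective f)
    {Z : Set V} {v : V} (hv : v ∈ Z) : Phi red f Z ∩ f v = reds red (f v) := by
  ext s
  constructor
  · rintro ⟨(⟨hr, u, huZ, hsu⟩ | ⟨hb, u, huZ, hsu⟩), hsv⟩
    · exact ⟨hsv, hr⟩
    · exact absurd (disj_comp hf hinj hsu hsv ▸ hv) huZ
  · rintro ⟨hsv, hr⟩
    exact ⟨Or.inl ⟨hr, v, hv, hsv⟩, hsv⟩

lemma Phi_inter_not_mem (hf : ∀ v : V, IsCompVtxSet A red (f v)) (hinj : Function.Injective f)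
    {Z : Set V} {v : V} (hv : v ∉ Z) : Phi red f Z ∩ f v = blues red (f v) := by
  ext s
  constructor
  · rintro ⟨(⟨hr, u, huZ, hsu⟩ | ⟨hb, u, huZ, hsu⟩), hsv⟩
    · exact absurd (disj_comp hf hinj hsu hsv ▸ huZ) hv
    · exact ⟨hsv, hb⟩
  · rintro ⟨hsv, hb⟩
    exact ⟨Or.inr ⟨hb, v, hv, hsv⟩, hsv⟩

lemma Phi_noncrossing (hA : IsRBArrangement A red)
    (hf : ∀ v : V, IsCompVtxSet A red (f v)) (hinj : Function.Injective f)
    (hi : ∀ v : V, ∀ s ∈ f v, ∀ t ∈ f v, red s = true → red t = true → ¬ Crosses s t)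
    (hii : ∀ u v : V, u ≠ v →
      ((∃ s ∈ f u, ∃ t ∈ f v, red s = true ∧ red t = true ∧ Crosses s t) ↔ G.Adj u v))
    {Z : Set V} (hindep : IsIndepSet G Z) : NonCrossing (Phi red f Z) := by
  rintro s hs t ht hcross
  obtain (⟨hrs, u, huZ, hsu⟩ | ⟨hbs, u, huZ, hsu⟩) := hs <;>
    obtain (⟨hrt, w, hwZ, htw⟩ | ⟨hbt, w, hwZ, htw⟩) := ht
  · by_cases huw : u = w
    · exact hi u s hsu t (huw ▸ htw) hrs hrt hcross
    · exact hindep u huZ w hwZ ((hii u w huw).mp ⟨s, hsu, t, htw, hrs, hrt, hcross⟩)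
  · have hadj : (bicrossGraph A red).Adj s t :=
      ⟨comp_subset (hf u) hsu, comp_subset (hf w) htw, hcross, by rw [hrs, hbt]; simp⟩
    have htu : t ∈ f u := comp_closed (hf u) hsu hadj
    exact hwZ (disj_comp hf hinj htu htw ▸ huZ)
  · have hadj : (bicrossGraph A red).Adj t s :=
      ⟨comp_subset (hf w) htw, comp_subset (hf u) hsu, crosses_symm hcross,
        by rw [hrt, hbs]; simp⟩
    have hsw : s ∈ f w := comp_closed (hf w) htw hadj
    exact huZ (disj_comp hf hinj hsw hsu ▸ hwZ)
  · have := (hA.blue_cross s (comp_subset (hf u) hsu) hbs).2 t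
      (comp_subset (hf w) htw) hcross
    rw [this] at hbt
    exact Bool.noConfusion hbt

lemma ncard_eq_sum (hA : IsRBArrangement A red)
    (hf : ∀ v : V, IsCompVtxSet A red (f v)) (hinj : Function.Injective f)
    (hsurj : ∀ C : Set Seg, IsCompVtxSet A red C → ∃ v : V, f v = C)
    {S : Set Seg} (hS : S ⊆ A) :
    S.ncard = ∑ v : V, (S ∩ f v).ncard := by
  have hSf : S.Finite := hA.finite.subset hS
  have hsplit : hSf.toFinset = Finset.univ.biUnion
      (fun v : V => hSf.toFinset.filter (· ∈ f v)) := by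
    ext s
    simp only [Finset.mem_biUnion, Finset.mem_filter, Finset.mem_univ, true_and,
      Set.Finite.mem_toFinset]
    constructor
    · intro hs
      obtain ⟨v, hv⟩ := cover_comp hsurj (hS hs)
      exact ⟨v, hs, hv⟩
    · rintro ⟨v, hs, _⟩; exact hs
  rw [Set.ncard_eq_toFinset_card S hSf, hsplit, Finset.card_biUnion]
  · refine Finset.sum_congr rfl (fun v _ => ?_)
    have he : S ∩ f v = ↑(hSf.toFinset.filter (· ∈ f v)) := by
      ext s
      simp [Set.Finite.mem_toFinset]
    rw [he, Set.ncard_coe_finset]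
  · intro u _ v _ huv
    rw [Function.onFun, Finset.disjoint_left]
    rintro s hs1 hs2
    simp only [Finset.mem_filter] at hs1 hs2
    exact huv (disj_comp hf hinj hs1.2 hs2.2)

lemma Phi_ncard (hA : IsRBArrangement A red)
    (hf : ∀ v : V, IsCompVtxSet A red (f v)) (hinj : Function.Injective f)
    (hsurj : ∀ C : Set Seg, IsCompVtxSet A red C → ∃ v : V, f v = C)
    (Z : Set V) :
    (Phi red f Z).ncard = ∑ v : V, (reds red (f v)).ncard := by
  rw [ncard_eq_sum hA hf hinj hsurj (Phi_subset hf Z)]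
  refine Finset.sum_congr rfl (fun v _ => ?_)
  by_cases hv : v ∈ Z
  · rw [Phi_inter_mem hf hinj hv]
  · rw [Phi_inter_not_mem hf hinj hv, red_card_eq_blue_card hA (hf v)]

lemma noncrossing_ncard_le (hA : IsRBArrangement A red)
    (hf : ∀ v : V, IsCompVtxSet A red (f v)) (hinj : Function.Injective f)
    (hsurj : ∀ C : Set Seg, IsCompVtxSet A red C → ∃ v : V, f v = C)
    {S' : Set Seg} (hS' : S' ⊆ A) (hnc : NonCrossing S') :
    S'.ncard ≤ ∑ v : V, (reds red (f v)).ncard := by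
  rw [ncard_eq_sum hA hf hinj hsurj hS']
  refine Finset.sum_le_sum (fun v _ => ?_)
  exact noncross_card_le hA (hf v) Set.inter_subset_right
    (fun s hs t ht => hnc s hs.1 t ht.1)

end Global

end RBAux

open RBAux

/-- Suppose the connected components of the bichromatic crossing graph of a
red–blue arrangement `A` are in bijection `f` with the vertices of a finite
simple graph `G`, so that (i) no two red segments of a single component cross,
and (ii) red segments of two distinct components cross exactly when the
corresponding vertices are adjacent in `G`.  Then `Z ↦ Φ(Z)` — taking the red
segments of components of vertices in `Z` and the blue segments of all other
components — is a bijection from the independent sets of `G` onto the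
maximum-cardinality non-crossing subsets of `A`.  Moreover, if every component
has exactly `6` red segments, then `Φ(Z)` has exactly `6·|Z|` red segments. -/
theorem indep_sets_biject_with_max_noncrossing {V : Type*} [Fintype V]
    (A : Set Seg) (red : Seg → Bool) (hA : IsRBArrangement A red)
    (G : SimpleGraph V) (f : V → Set Seg)
    (hf : ∀ v : V, IsCompVtxSet A red (f v))
    (hinj : Function.Injective f)
    (hsurj : ∀ C : Set Seg, IsCompVtxSet A red C → ∃ v : V, f v = C)
    (hi : ∀ v : V, ∀ s ∈ f v, ∀ t ∈ f v,
      red s = true → red t = true → ¬ Crosses s t)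
    (hii : ∀ u v : V, u ≠ v →
      ((∃ s ∈ f u, ∃ t ∈ f v, red s = true ∧ red t = true ∧ Crosses s t) ↔
        G.Adj u v)) :
    Set.BijOn
      (fun Z : Set V =>
        {s : Seg | (red s = true ∧ ∃ v ∈ Z, s ∈ f v) ∨
                   (red s = false ∧ ∃ v : V, v ∉ Z ∧ s ∈ f v)})
      {Z : Set V | IsIndepSet G Z}
      {S : Set Seg | S ⊆ A ∧ NonCrossing S ∧
        ∀ S' : Set Seg, S' ⊆ A → NonCrossing S' → S'.ncard ≤ S.ncard} ∧
    ((∀ C : Set Seg, IsCompVtxSet A red C → {s ∈ C | red s = true}.ncard = 6) →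
      ∀ Z : Set V, IsIndepSet G Z →
        {s ∈ {s : Seg | (red s = true ∧ ∃ v ∈ Z, s ∈ f v) ∨
          (red s = false ∧ ∃ v : V, v ∉ Z ∧ s ∈ f v)} | red s = true}.ncard =
          6 * Z.ncard) := by
  classical
  constructor
  · refine ⟨?_, ?_, ?_⟩
    -- MapsTo
    · intro Z hZ
      refine ⟨Phi_subset hf Z, Phi_noncrossing hA hf hinj hi hii hZ, ?_⟩
      intro S' hS'A hS'nc
      calc S'.ncard ≤ ∑ v : V, (reds red (f v)).ncard :=
            noncrossing_ncard_le hA hf hinj hsurj hS'A hS'nc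
        _ = (Phi red f Z).ncard := (Phi_ncard hA hf hinj hsurj Z).symm
    -- InjOn
    · intro Z1 _ Z2 _ heq
      have key : ∀ Z Z' : Set V, Phi red f Z = Phi red f Z' → ∀ v ∈ Z, v ∈ Z' := by
        intro Z Z' heq v hv
        obtain ⟨s, hsC, hsr⟩ := exists_red_mem hA (hf v)
        have hsPhi : s ∈ Phi red f Z := Or.inl ⟨hsr, v, hv, hsC⟩
        rw [heq] at hsPhi
        obtain (⟨_, u, huZ, hsu⟩ | ⟨hb, _, _, _⟩) := hsPhi
        · exact disj_comp hf hinj hsu hsC ▸ huZ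
        · rw [hsr] at hb; exact Bool.noConfusion hb
      ext v
      exact ⟨key Z1 Z2 heq v, key Z2 Z1 heq.symm v⟩
    -- SurjOn
    · rintro S ⟨hSA, hSnc, hSmax⟩
      have h0 : IsIndepSet G (∅ : Set V) := by
        intro u hu; exact absurd hu (Set.notMem_empty u)
      have hge : ∑ v : V, (reds red (f v)).ncard ≤ S.ncard := by
        have := hSmax (Phi red f ∅) (Phi_subset hf ∅)
          (Phi_noncrossing hA hf hinj hi hii h0)
        rwa [Phi_ncard hA hf hinj hsurj] at this
      have hle : ∀ v : V, (S ∩ f v).ncard ≤ (reds red (f v)).ncard := fun v =>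
        noncross_card_le hA (hf v) Set.inter_subset_right
          (fun s hs t ht => hSnc s hs.1 t ht.1)
      have hsumS : S.ncard = ∑ v : V, (S ∩ f v).ncard :=
        ncard_eq_sum hA hf hinj hsurj hSA
      have hall : ∀ v : V, (S ∩ f v).ncard = (reds red (f v)).ncard := by
        by_contra hcon
        push_neg at hcon
        obtain ⟨v0, hv0⟩ := hcon
        have hlt : ∑ v : V, (S ∩ f v).ncard < ∑ v : V, (reds red (f v)).ncard :=
          Finset.sum_lt_sum (fun v _ => hle v)
            ⟨v0, Finset.mem_univ v0, lt_of_le_of_ne (hle v0) hv0⟩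
        omega
      have hdich : ∀ v : V, S ∩ f v = reds red (f v) ∨ S ∩ f v = blues red (f v) :=
        fun v => noncross_eq_reds_or_blues hA (hf v) Set.inter_subset_right
          (fun s hs t ht => hSnc s hs.1 t ht.1) (hall v)
      refine ⟨{v : V | S ∩ f v = reds red (f v)}, ?_, ?_⟩
      · intro u hu v hv hadj
        obtain ⟨s, hsu, t, htv, hsr, htr, hcr⟩ := (hii u v (G.ne_of_adj hadj)).mpr hadj
        have hsS : s ∈ S ∩ f u := by rw [hu]; exact ⟨hsu, hsr⟩
        have htS : t ∈ S ∩ f v := by rw [hv]; exact ⟨htv, htr⟩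
        exact hSnc s hsS.1 t htS.1 hcr
      · show Phi red f {v : V | S ∩ f v = reds red (f v)} = S
        apply Set.Subset.antisymm
        · rintro s (⟨hr, v, hv, hsv⟩ | ⟨hb, v, hv, hsv⟩)
          · have : s ∈ S ∩ f v := by rw [hv]; exact ⟨hsv, hr⟩
            exact this.1
          · rcases hdich v with hd | hd
            · exact absurd hd hv
            · have : s ∈ S ∩ f v := by rw [hd]; exact ⟨hsv, hb⟩
              exact this.1
        · intro s hsS
          obtain ⟨v, hsv⟩ := cover_comp hsurj (hSA hsS)
          cases hr : red s with
          | true =>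
            have hvZ : S ∩ f v = reds red (f v) := by
              rcases hdich v with hd | hd
              · exact hd
              · have hmem : s ∈ blues red (f v) := hd ▸ (⟨hsS, hsv⟩ : s ∈ S ∩ f v)
                have := hmem.2
                rw [hr] at this
                exact Bool.noConfusion this
            exact Or.inl ⟨hr, v, hvZ, hsv⟩
          | false =>
            have hvZ : ¬ (S ∩ f v = reds red (f v)) := by
              intro hd
              have hmem : s ∈ reds red (f v) := hd ▸ (⟨hsS, hsv⟩ : s ∈ S ∩ f v)
              have := hmem.2
              rw [hr] at this
              exact Bool.noConfusion this
            exact Or.inr ⟨hr, v, hvZ, hsv⟩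
  -- the `6 · |Z|` count
  · intro h6 Z _
    show {s ∈ Phi red f Z | red s = true}.ncard = 6 * Z.ncard
    have hTA : {s ∈ Phi red f Z | red s = true} ⊆ A := fun s hs => Phi_subset hf Z hs.1
    have hTv_mem : ∀ v ∈ Z,
        {s ∈ Phi red f Z | red s = true} ∩ f v = reds red (f v) := by
      intro v hv
      ext s
      constructor
      · rintro ⟨⟨_, hr⟩, hsv⟩; exact ⟨hsv, hr⟩
      · rintro ⟨hsv, hr⟩; exact ⟨⟨Or.inl ⟨hr, v, hv, hsv⟩, hr⟩, hsv⟩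
    have hTv_not : ∀ v : V, v ∉ Z →
        {s ∈ Phi red f Z | red s = true} ∩ f v = (∅ : Set Seg) := by
      intro v hv
      ext s
      simp only [Set.mem_empty_iff_false, iff_false]
      rintro ⟨⟨(⟨_, u, huZ, hsu⟩ | ⟨hb, _, _, _⟩), hr⟩, hsv⟩
      · exact hv (disj_comp hf hinj hsu hsv ▸ huZ)
      · rw [hr] at hb; exact Bool.noConfusion hb
    have hZfin : Z.Finite := Z.toFinite
    calc {s ∈ Phi red f Z | red s = true}.ncard
        = ∑ v : V, ({s ∈ Phi red f Z | red s = true} ∩ f v).ncard :=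
          ncard_eq_sum hA hf hinj hsurj hTA
      _ = ∑ v : V, (if v ∈ Z then 6 else 0) := by
          refine Finset.sum_congr rfl (fun v _ => ?_)
          by_cases hv : v ∈ Z
          · rw [if_pos hv, hTv_mem v hv]
            exact h6 (f v) (hf v)
          · rw [if_neg hv, hTv_not v hv]
            exact Set.ncard_empty _
      _ = 6 * Z.ncard := by
          rw [← Finset.sum_filter]
          rw [show Finset.univ.filter (· ∈ Z) = hZfin.toFinset from by ext; simp [Set.Finite.mem_toFinset]]
          rw [Finset.sum_const, smul_eq_mul, ← Set.ncard_eq_toFinset_card Z hZfin, mul_comm]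
end

section
/- Let A be a red–blue arrangement, let S be a non-crossing subset of A, and let C ⊆ A be the vertex set of a connected component of the bichromatic crossing graph of A. Then |S ∩ C| ≤ |C| / 2. -/
/-- A non-crossing subset of a red–blue arrangement contains at most half of
the segments of each connected component of the bichromatic crossing graph. -/
theorem noncrossing_inter_component_card_le (A : Set Seg) (red : Seg → Bool)
    (hA : IsRBArrangement A red) (S : Set Seg) (hS : S ⊆ A)
    (hnc : NonCrossing S) (C : Set Seg) (hC : IsCompVtxSet A red C) :
    (S ∩ C).ncard ≤ C.ncard / 2 := by
  classical
  obtain ⟨s₀, hs₀A, hCdef⟩ := hC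
  have hCA : C ⊆ A := by rw [hCdef]; exact fun t ht => ht.1
  have hAf : A.Finite := hA.finite
  have hCf : C.Finite := hAf.subset hCA
  have hadj_iff : ∀ s t : Seg, (bicrossGraph A red).Adj s t ↔
      (s ∈ A ∧ t ∈ A ∧ Crosses s t ∧ red s ≠ red t) := fun s t => Iff.rfl
  set N : Seg → Set Seg := fun s => {t ∈ A | Crosses s t ∧ red s ≠ red t} with hN
  have hNf : ∀ s, (N s).Finite := fun s => hAf.subset (fun t ht => ht.1)
  have hNmem : ∀ s t : Seg, s ∈ A → (t ∈ N s ↔ (bicrossGraph A red).Adj s t) := by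
    intro s t hs
    rw [hadj_iff]
    simp only [hN, Set.mem_setOf_eq]
    tauto
  have hdeg : ∀ s ∈ A, (N s).ncard = 2 := by
    intro s hs
    cases hb : red s with
    | false =>
      obtain ⟨h2, hall⟩ := hA.blue_cross s hs hb
      have he : N s = {t ∈ A | Crosses s t} := by
        ext t
        simp only [hN, Set.mem_setOf_eq]
        refine ⟨fun h => ⟨h.1, h.2.1⟩, fun h => ⟨h.1, h.2, ?_⟩⟩
        rw [hb, hall t h.1 h.2]
        simp
      rw [he, h2]
    | true =>
      obtain ⟨-, h2⟩ := hA.red_cross s hs hb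
      have he : N s = {t ∈ A | Crosses s t ∧ red t = false} := by
        ext t
        simp only [hN, Set.mem_setOf_eq, hb]
        constructor
        · rintro ⟨h1, h2', h3⟩
          refine ⟨h1, h2', ?_⟩
          cases hc : red t
          · rfl
          · exact absurd hc.symm h3
        · rintro ⟨h1, h2', h3⟩
          exact ⟨h1, h2', by rw [h3]; simp⟩
      rw [he, h2]
  have hCclosed : ∀ t ∈ C, ∀ u : Seg, (bicrossGraph A red).Adj t u → u ∈ C := by
    intro t ht u hadj
    rw [hCdef] at ht ⊢
    exact ⟨((hadj_iff t u).1 hadj).2.1, ht.2.trans hadj.reachable⟩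
  have hXf : (S ∩ C).Finite := hCf.subset Set.inter_subset_right
  have hYf : (C \ S).Finite := hCf.subset Set.diff_subset
  set Xf := hXf.toFinset with hXfd
  set Yf := hYf.toFinset with hYfd
  have key : ∑ s ∈ Xf, (Yf.filter (fun t => (bicrossGraph A red).Adj s t)).card
           = ∑ t ∈ Yf, (Xf.filter (fun s => (bicrossGraph A red).Adj s t)).card := by
    simp_rw [Finset.card_filter]
    rw [Finset.sum_comm]
  have hL : ∀ s ∈ Xf, (Yf.filter (fun t => (bicrossGraph A red).Adj s t)).card = 2 := by
    intro s hsX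
    rw [Set.Finite.mem_toFinset] at hsX
    obtain ⟨hsS, hsC⟩ := hsX
    have hsA : s ∈ A := hCA hsC
    have heq : (Yf.filter (fun t => (bicrossGraph A red).Adj s t)) = (hNf s).toFinset := by
      ext t
      simp only [Finset.mem_filter, Set.Finite.mem_toFinset, Set.mem_diff, hYfd]
      constructor
      · rintro ⟨-, hadj⟩; exact (hNmem s t hsA).2 hadj
      · intro htN
        have hadj := (hNmem s t hsA).1 htN
        refine ⟨⟨hCclosed s hsC t hadj, fun htS => ?_⟩, hadj⟩
        exact hnc s hsS t htS ((hadj_iff s t).1 hadj).2.2.1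
    rw [heq, ← Set.ncard_eq_toFinset_card _ (hNf s)]
    exact hdeg s hsA
  have hR : ∀ t ∈ Yf, (Xf.filter (fun s => (bicrossGraph A red).Adj s t)).card ≤ 2 := by
    intro t htY
    rw [Set.Finite.mem_toFinset] at htY
    have htA : t ∈ A := hCA htY.1
    have hsub : (Xf.filter (fun s => (bicrossGraph A red).Adj s t)) ⊆ (hNf t).toFinset := by
      intro s hs
      rw [Finset.mem_filter] at hs
      rw [Set.Finite.mem_toFinset]
      exact (hNmem t s htA).2 hs.2.symm
    calc (Xf.filter (fun s => (bicrossGraph A red).Adj s t)).card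
        ≤ (hNf t).toFinset.card := Finset.card_le_card hsub
      _ = 2 := by rw [← Set.ncard_eq_toFinset_card _ (hNf t)]; exact hdeg t htA
  have h1 : 2 * Xf.card ≤ 2 * Yf.card := by
    have e1 : ∑ s ∈ Xf, (Yf.filter (fun t => (bicrossGraph A red).Adj s t)).card
        = 2 * Xf.card := by
      rw [Finset.sum_congr rfl hL, Finset.sum_const, smul_eq_mul, mul_comm]
    have e2 : ∑ t ∈ Yf, (Xf.filter (fun s => (bicrossGraph A red).Adj s t)).card
        ≤ 2 * Yf.card := by
      calc ∑ t ∈ Yf, (Xf.filter (fun s => (bicrossGraph A red).Adj s t)).card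
          ≤ ∑ _t ∈ Yf, 2 := Finset.sum_le_sum hR
        _ = 2 * Yf.card := by rw [Finset.sum_const, smul_eq_mul, mul_comm]
    rw [← e1, key]; exact e2
  have hX : Xf.card = (S ∩ C).ncard := (Set.ncard_eq_toFinset_card _ hXf).symm
  have hY : Yf.card = (C \ S).ncard := (Set.ncard_eq_toFinset_card _ hYf).symm
  rw [hX, hY] at h1
  have hsum : (S ∩ C).ncard + (C \ S).ncard = C.ncard := by
    have hds : C \ S = C \ (S ∩ C) := by
      ext t; simp only [Set.mem_diff, Set.mem_inter_iff]; tauto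
    rw [hds, Set.ncard_diff Set.inter_subset_right hXf]
    have hle : (S ∩ C).ncard ≤ C.ncard :=
      Set.ncard_le_ncard Set.inter_subset_right hCf
    omega
  omega
end
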